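/- Let m ≥ 3 and ν = m - 2 ≥ 1. Let ι₁, …, ι_m be complex numbers with Σ_{j=1}^m ι_j = -ν (as complex numbers). Assume that for every nonempty subset S ⊆ {1,…,m}, the real number Σ_{j∈S} Re(ι_j) does not lie in the open interval (1/2 - |S|, 3/2 - |S|). Then there exists j with Re(ι_j) > 0. -/

import Mathlib

/-! Suppose every `Re ι_j ≤ 0`. Singletons then force `Re ι_j ≤ -1/2 < 0`. Adding the indices
one at a time shows, by induction, that every subset sum of real parts is at most `1/2 - |S|`:
a new negative term keeps the sum strictly below the forbidden interval's upper end
`3/2 - |S|`, so it must stay below its lower end. For the full set this contradicts `∑ Re ι_j = -ν = 2 - m`. -/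

open Finset

theorem sum_le_half_sub_card_of_neg {α : Type*} [DecidableEq α] (x : α → ℝ)
    (hx : ∀ j, x j < 0)
    (hgap : ∀ S : Finset α, S.Nonempty →
      (∑ j ∈ S, x j) ∉ Set.Ioo (1 / 2 - (#S : ℝ)) (3 / 2 - (#S : ℝ)))
    (s : Finset α) :
    ∑ j ∈ s, x j ≤ 1 / 2 - #s := by
  induction s using Finset.induction_on with
  | empty => norm_num
  | insert j s hj ih =>
    have hgap_insert := hgap (insert j s) (insert_nonempty j s)
    rw [sum_insert hj, card_insert_of_notMem hj] at hgap_insert ⊢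
    push_cast at hgap_insert ⊢
    simp only [Set.mem_Ioo, not_and, not_lt] at hgap_insert
    by_contra! hbig
    linarith [hgap_insert hbig, hx j]

/-- If `ι₁,…,ι_m` (`m ≥ 3`, `ν = m-2`) sum to `-ν` and no nonempty subset has real-part
sum in `(1/2 - |S|, 3/2 - |S|)`, then some `ι_j` has positive real part. -/
theorem stmt13 (m ν : ℕ) (hm : 3 ≤ m) (hν : ν = m - 2) (ι : Fin m → ℂ)
    (hsum : ∑ j, ι j = -(ν : ℂ))
    (h : ∀ S : Finset (Fin m), S.Nonempty →
      (∑ j ∈ S, (ι j).re) ∉ Set.Ioo (1 / 2 - (S.card : ℝ)) (3 / 2 - (S.card : ℝ))) :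
    ∃ j, 0 < (ι j).re := by
  by_contra! hnonpos
  have hneg : ∀ j, (ι j).re < 0 := by
    intro j
    have hgap_single := h {j} (singleton_nonempty j)
    simp only [sum_singleton, card_singleton, Nat.cast_one, Set.mem_Ioo, not_and, not_lt]
      at hgap_single
    by_contra! hj
    linarith [hgap_single (by linarith), hnonpos j]
  have hbound := sum_le_half_sub_card_of_neg (fun j => (ι j).re) hneg h univ
  have hre : ∑ j, (ι j).re = 2 - m := by
    rw [← Complex.re_sum, hsum, hν, Nat.cast_sub (by omega)]
    simp
  rw [hre, card_univ, Fintype.card_fin] at hbound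
  linarith
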